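/- arXiv:2212.06338 — 4 statements merged into one kernel-verified Lean document; each statement's English description precedes it below -/
import Mathlib

section
/- Let R ~ P = χ²_k, the chi-squared distribution with k degrees of freedom, and let y ≥ k. Then the dual maximizer is λ* = (1 − k/y)/2, the stability equals I_y(P) = (1/2)( y − k + k log(k/y) ), and the infimum defining I_y(P) is attained at the Gamma distribution Q* with shape k/2 and rate k/(2y). -/
/-!
For a nonnegative `R ~ P`, every `λ ≥ 0` with `E_P[e^{λR}] < ∞` gives the Donsker–Varadhan
lower bound `λ y − log E_P[e^{λR}] ≤ D_KL(Q‖P)` whenever `E_Q[R] ≥ y`: it is Gibbs' inequality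
`D_KL(Q‖P_λ) ≥ 0` for the exponentially tilted measure `P_λ`. If `P_λ` has mean exactly `y`,
then `D_KL(P_λ‖P)` equals this bound, so `P_λ` attains the stability.

Tilting `Gamma(a, r)` by `λ < r` gives `Gamma(a, r − λ)`, of mean `a / (r − λ)`, so the
optimal tilt is `λ* = r − a/y`, which is nonnegative exactly when `y ≥ a/r`; `χ²_k` is
`Gamma(k/2, 1/2)`.
-/

open MeasureTheory ProbabilityTheory Real Set
open scoped ENNReal NNReal

noncomputable section

namespace Stab

open Classical in
/-- The Kullback-Leibler divergence `D_KL(Q‖P) = E_Q[log dQ/dP]` when `Q ≪ P` (and the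
log-density is integrable), and `+∞` otherwise. -/
def klDiv (Q P : Measure ℝ) : EReal :=
  if Q ≪ P ∧ Integrable (fun x => Real.log ((Q.rnDeriv P x).toReal)) Q then
    ((∫ x, Real.log ((Q.rnDeriv P x).toReal) ∂Q : ℝ) : EReal)
  else ⊤

/-- The extended-real-valued expectation `E_Q[R]` of the identity `R(x) = x` under `Q`. -/
def erealExp (Q : Measure ℝ) : EReal :=
  ((∫⁻ x, ENNReal.ofReal x ∂Q : ℝ≥0∞) : EReal) - ((∫⁻ x, ENNReal.ofReal (-x) ∂Q : ℝ≥0∞) : EReal)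

/-- The stability `I_y(P) = inf { D_KL(Q‖P) : Q a probability measure, E_Q[R] ≥ y }`. -/
def stability (y : ℝ) (P : Measure ℝ) : EReal :=
  ⨅ Q ∈ {Q : Measure ℝ | IsProbabilityMeasure Q ∧ (y : EReal) ≤ erealExp Q}, klDiv Q P

/-- The exponential moment `E_P[e^{λ R}]`, valued in `ℝ≥0∞`. -/
def expMoment (P : Measure ℝ) (l : ℝ) : ℝ≥0∞ := ∫⁻ x, ENNReal.ofReal (Real.exp (l * x)) ∂P

/-- The dual objective `λ ↦ λ y − log E_P[e^{λ R}]`. -/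
def dualObj (y : ℝ) (P : Measure ℝ) (l : ℝ) : EReal :=
  ((l * y : ℝ) : EReal) - ENNReal.log (expMoment P l)

/-- The dual value `sup_{λ ∈ ℝ} { λ y − log E_P[e^{λ R}] }`. -/
def dualValue (y : ℝ) (P : Measure ℝ) : EReal := ⨆ l : ℝ, dualObj y P l

/-- `EReal → ℝ≥0∞`, sending `⊤` to `⊤` and negative values to `0`. -/
def erealToENNReal (a : EReal) : ℝ≥0∞ := if a = ⊤ then ⊤ else ENNReal.ofReal a.toReal

/-- The absolute difference `|a − b|` of two extended reals, valued in `ℝ≥0∞`. -/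
def eAbsDiff (a b : EReal) : ℝ≥0∞ := erealToENNReal (max (a - b) (b - a))

/-- The empirical measure of the sample `x = (x 1, …, x n)`. -/
def empMeasure {n : ℕ} (x : Fin n → ℝ) : Measure ℝ :=
  (n : ℝ≥0∞)⁻¹ • ∑ i, Measure.dirac (x i)

/-- The class `P_{σ,y,γ}` of distributions with Gamma-like tails. -/
def Pclass (σ y γ : ℝ) : Set (Measure ℝ) :=
  {P | IsProbabilityMeasure P ∧ (∀ᵐ x ∂P, 0 ≤ x) ∧ expMoment P σ = ⊤ ∧
    (∀ l : ℝ, 0 ≤ l → l < σ → expMoment P l ≤ ENNReal.ofReal (σ / (σ - l))) ∧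
    (∫⁻ x, ENNReal.ofReal x ∂P) ≤ ENNReal.ofReal (1 / σ) ∧
    ∃ l : ℝ, IsMaxOn (dualObj y P) Set.univ l ∧ l ≤ σ - γ / y}

open Filter Topology

lemma erealExp_eq_integral {Q : Measure ℝ} (h0 : ∀ᵐ x ∂Q, 0 ≤ x)
    (hint : Integrable (fun x => x) Q) : erealExp Q = ((∫ x, x ∂Q : ℝ) : EReal) := by
  have hneg : ∫⁻ x, ENNReal.ofReal (-x) ∂Q = 0 := by
    rw [lintegral_congr_ae (h0.mono fun x hx => ENNReal.ofReal_eq_zero.2 (neg_nonpos.2 hx)),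
      lintegral_zero]
  rw [erealExp, hneg, ← ofReal_integral_eq_lintegral_ofReal hint h0, EReal.coe_ennreal_ofReal,
    max_eq_left (integral_nonneg_of_ae h0)]
  simp

lemma integrable_and_integral_eq_of_lintegral_ofReal {α : Type*} [MeasurableSpace α]
    {μ : Measure α} {f : α → ℝ} {c : ℝ} (hf : AEStronglyMeasurable f μ) (h0 : 0 ≤ᵐ[μ] f)
    (hc : 0 ≤ c) (h : ∫⁻ x, ENNReal.ofReal (f x) ∂μ = ENNReal.ofReal c) :
    Integrable f μ ∧ ∫ x, f x ∂μ = c :=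
  ⟨(lintegral_ofReal_ne_top_iff_integrable hf h0).1 (h ▸ ENNReal.ofReal_ne_top),
    by rw [integral_eq_lintegral_of_nonneg_ae h0 hf, h, ENNReal.toReal_ofReal hc]⟩

section DonskerVaradhan

variable {α : Type*} [MeasurableSpace α] {μ ν : Measure α} [IsProbabilityMeasure μ]
  [IsProbabilityMeasure ν] {f : α → ℝ}

theorem integral_sub_log_integral_exp_le_integral_llr (hμν : μ ≪ ν)
    (h_int : Integrable (llr μ ν) μ) (hfμ : Integrable f μ)
    (hfν : Integrable (fun x => exp (f x)) ν) :
    ∫ x, f x ∂μ - log (∫ x, exp (f x) ∂ν) ≤ ∫ x, llr μ ν x ∂μ := by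
  have := isProbabilityMeasure_tilted hfν
  have hgibbs := InformationTheory.integral_llr_add_sub_measure_univ_nonneg
    (hμν.trans (absolutelyContinuous_tilted hfν))
    (integrable_llr_tilted_right hμν hfμ h_int hfν)
  rw [integral_llr_tilted_right hμν hfμ hfν h_int] at hgibbs
  simp only [probReal_univ, add_sub_cancel_right] at hgibbs
  linarith

lemma integrable_of_integrable_llr (hμν : μ ≪ ν) (h_int : Integrable (llr μ ν) μ)
    (hfν : Integrable (fun x => exp (f x)) ν) (hf : AEStronglyMeasurable f μ)
    (hf0 : 0 ≤ᵐ[μ] f) : Integrable f μ := by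
  have := isProbabilityMeasure_tilted hfν
  -- `f = log E_ν[e^f] + llr μ ν + llr (ν.tilted f) μ`, and `log t ≤ t` bounds the last term.
  refine Integrable.mono' (((integrable_const (log (∫ x, exp (f x) ∂ν))).add h_int).add
    (Measure.integrable_toReal_rnDeriv (μ := ν.tilted f) (ν := μ))) hf ?_
  filter_upwards [llr_tilted_right hμν hfν,
    neg_llr (hμν.trans (absolutelyContinuous_tilted hfν)), hf0] with x hllr hneg hx
  have hlog := log_le_self (ENNReal.toReal_nonneg (a := (ν.tilted f).rnDeriv μ x))
  simp only [Pi.add_apply, Pi.neg_apply, Pi.zero_apply, llr] at hllr hneg hx hlog ⊢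
  rw [Real.norm_of_nonneg hx]
  linarith

end DonskerVaradhan

lemma klDiv_tilted {P : Measure ℝ} [IsProbabilityMeasure P] {f : ℝ → ℝ}
    (hexp : Integrable (fun x => exp (f x)) P) (hf : Integrable f (P.tilted f)) :
    klDiv (P.tilted f) P =
      ((∫ x, f x ∂P.tilted f - log (∫ x, exp (f x) ∂P) : ℝ) : EReal) := by
  have := isProbabilityMeasure_tilted hexp
  have hllr := (tilted_absolutelyContinuous P f).ae_le (log_rnDeriv_tilted_left_self hexp)
  have h_int : Integrable (fun x => log ((P.tilted f).rnDeriv P x).toReal) (P.tilted f) :=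
    (integrable_congr hllr).2 (hf.sub (integrable_const _))
  rw [klDiv, if_pos ⟨tilted_absolutelyContinuous P f, h_int⟩, integral_congr_ae hllr,
    integral_sub hf (integrable_const _), integral_const]
  simp

theorem le_klDiv_of_le_erealExp {P Q : Measure ℝ} [IsProbabilityMeasure P]
    [IsProbabilityMeasure Q] (hP : ∀ᵐ x ∂P, 0 ≤ x) {l y : ℝ} (hl : 0 ≤ l)
    (hexp : Integrable (fun x => exp (l * x)) P) (hy : (y : EReal) ≤ erealExp Q) :
    ((l * y - log (∫ x, exp (l * x) ∂P) : ℝ) : EReal) ≤ klDiv Q P := by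
  rw [klDiv]
  split_ifs with h
  swap
  · exact le_top
  obtain ⟨hQP, h_int⟩ := h
  have hQ : ∀ᵐ x ∂Q, 0 ≤ x := hQP.ae_le hP
  have hf : Integrable (fun x => l * x) Q := integrable_of_integrable_llr hQP h_int hexp
    (by fun_prop) (hQ.mono fun x hx => mul_nonneg hl hx)
  have hly : l * y ≤ ∫ x, l * x ∂Q := by
    rcases hl.eq_or_lt with rfl | hl
    · simp
    have hx : Integrable (fun x => x) Q := by simpa [hl.ne'] using hf.const_mul l⁻¹
    rw [erealExp_eq_integral hQ hx, EReal.coe_le_coe_iff] at hy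
    rw [integral_const_mul]
    exact mul_le_mul_of_nonneg_left hy hl.le
  exact EReal.coe_le_coe_iff.2 ((sub_le_sub_right hly _).trans
    (integral_sub_log_integral_exp_le_integral_llr hQP h_int hf hexp))

theorem stability_eq_klDiv_tilted {P : Measure ℝ} [IsProbabilityMeasure P]
    (hP : ∀ᵐ x ∂P, 0 ≤ x) {l y : ℝ} (hl : 0 ≤ l) (hexp : Integrable (fun x => exp (l * x)) P)
    (hmean_int : Integrable (fun x => x) (P.tilted fun x => l * x))
    (hmean : ∫ x, x ∂(P.tilted fun x => l * x) = y) :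
    stability y P = klDiv (P.tilted fun x => l * x) P := by
  have := isProbabilityMeasure_tilted hexp
  have hfeas : (y : EReal) ≤ erealExp (P.tilted fun x => l * x) := by
    rw [erealExp_eq_integral ((tilted_absolutelyContinuous P _).ae_le hP) hmean_int, hmean]
  have hkl : klDiv (P.tilted fun x => l * x) P =
      ((l * y - log (∫ x, exp (l * x) ∂P) : ℝ) : EReal) := by
    rw [klDiv_tilted hexp (hmean_int.const_mul l), integral_const_mul, hmean]
  refine le_antisymm (iInf₂_le _ ⟨inferInstance, hfeas⟩) (le_iInf₂ fun Q ⟨hQ, hQy⟩ => ?_)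
  rw [hkl]
  exact le_klDiv_of_le_erealExp hP hl hexp hQy

lemma expMoment_mono {P : Measure ℝ} (hP : ∀ᵐ x ∂P, 0 ≤ x) : Monotone (expMoment P) :=
  fun _ _ hll' => lintegral_mono_ae (hP.mono fun _ hx =>
    ENNReal.ofReal_le_ofReal (exp_le_exp.2 (mul_le_mul_of_nonneg_right hll' hx)))

section Gamma

variable {a r l : ℝ}

lemma measurable_gammaPDF (a r : ℝ) : Measurable (gammaPDF a r) :=
  (measurable_gammaPDFReal a r).ennreal_ofReal

lemma ae_nonneg_gammaMeasure : ∀ᵐ x ∂gammaMeasure a r, 0 ≤ x := by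
  rw [gammaMeasure, ae_withDensity_iff (measurable_gammaPDF a r)]
  exact ae_of_all _ fun x hx => not_lt.1 fun hneg => hx (gammaPDF_of_neg hneg)

lemma gammaPDFReal_mul_exp (hr : 0 < r) (hl : l < r) (x : ℝ) :
    gammaPDFReal a r x * exp (l * x) = (r / (r - l)) ^ a * gammaPDFReal a (r - l) x := by
  have hrl : 0 < r - l := sub_pos.2 hl
  by_cases hx : 0 ≤ x
  · have hexp : exp (-(r * x)) * exp (l * x) = exp (-((r - l) * x)) := by
      rw [← exp_add]; ring_nf
    simp only [gammaPDFReal, if_pos hx, div_rpow hr.le hrl.le]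
    rw [mul_assoc, hexp]
    field_simp [(rpow_pos_of_pos hrl a).ne']
  · simp [gammaPDFReal, hx]

lemma gammaPDFReal_mul_self (ha : 0 < a) (hr : 0 < r) (x : ℝ) :
    gammaPDFReal a r x * x = a / r * gammaPDFReal (a + 1) r x := by
  by_cases hx : 0 ≤ x
  · have hpow : x ^ (a - 1) * x = x ^ (a + 1 - 1) := by
      rcases hx.eq_or_lt with rfl | hx
      · rw [mul_zero, zero_rpow (by linarith)]
      · rw [show a + 1 - 1 = a - 1 + 1 by ring, rpow_add_one hx.ne']
    simp only [gammaPDFReal, if_pos hx, Gamma_add_one ha.ne', rpow_add_one hr.ne']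
    rw [← hpow]
    field_simp [(Gamma_pos_of_pos ha).ne']
  · simp [gammaPDFReal, hx]

lemma expMoment_gammaMeasure_of_lt (ha : 0 < a) (hr : 0 < r) (hl : l < r) :
    expMoment (gammaMeasure a r) l = ENNReal.ofReal ((r / (r - l)) ^ a) := by
  have hrl : 0 < r - l := sub_pos.2 hl
  rw [expMoment, gammaMeasure, lintegral_withDensity_eq_lintegral_mul _
    (measurable_gammaPDF a r) (by fun_prop)]
  have hpdf : ∀ x, gammaPDF a r x * ENNReal.ofReal (exp (l * x)) =
      ENNReal.ofReal ((r / (r - l)) ^ a) * gammaPDF a (r - l) x := fun x => by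
    rw [gammaPDF, gammaPDF, ← ENNReal.ofReal_mul (gammaPDFReal_nonneg ha hr x),
      gammaPDFReal_mul_exp hr hl, ENNReal.ofReal_mul (rpow_nonneg (div_pos hr hrl).le a)]
  simp_rw [Pi.mul_apply, hpdf]
  rw [lintegral_const_mul _ (measurable_gammaPDF a (r - l)), lintegral_gammaPDF_eq_one ha hrl,
    mul_one]

lemma expMoment_gammaMeasure_of_le (ha : 0 < a) (hr : 0 < r) (hl : r ≤ l) :
    expMoment (gammaMeasure a r) l = ⊤ := by
  -- `expMoment` is monotone, and `(r / (r - λ')) ^ a → ∞` as `λ' ↑ r`.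
  have hgap : Tendsto (fun l' => r - l') (𝓝[<] r) (𝓝[>] 0) := by
    refine tendsto_nhdsWithin_of_tendsto_nhds_of_eventually_within _ ?_ ?_
    · exact ((continuous_const.sub continuous_id).tendsto' r 0 (sub_self r)).mono_left
        nhdsWithin_le_nhds
    · filter_upwards [self_mem_nhdsWithin] with l' hl' using sub_pos.2 (mem_Iio.1 hl')
  have hlim : Tendsto (fun l' => ENNReal.ofReal ((r / (r - l')) ^ a)) (𝓝[<] r) (𝓝 ⊤) :=
    ENNReal.tendsto_ofReal_atTop.comp ((tendsto_rpow_atTop ha).comp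
      ((tendsto_inv_nhdsGT_zero.comp hgap).const_mul_atTop hr))
  refine top_le_iff.1 (le_of_tendsto hlim ?_)
  filter_upwards [self_mem_nhdsWithin] with l' hl'
  rw [← expMoment_gammaMeasure_of_lt ha hr hl']
  exact expMoment_mono ae_nonneg_gammaMeasure (le_of_lt (lt_of_lt_of_le hl' hl))

lemma integrable_and_integral_exp_gammaMeasure (ha : 0 < a) (hr : 0 < r) (hl : l < r) :
    Integrable (fun x => exp (l * x)) (gammaMeasure a r) ∧
      ∫ x, exp (l * x) ∂gammaMeasure a r = (r / (r - l)) ^ a :=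
  integrable_and_integral_eq_of_lintegral_ofReal (by fun_prop)
    (ae_of_all _ fun _ => (exp_pos _).le) (rpow_nonneg (div_pos hr (sub_pos.2 hl)).le a)
    (expMoment_gammaMeasure_of_lt ha hr hl)

lemma integrable_and_integral_id_gammaMeasure (ha : 0 < a) (hr : 0 < r) :
    Integrable (fun x => x) (gammaMeasure a r) ∧ ∫ x, x ∂gammaMeasure a r = a / r := by
  refine integrable_and_integral_eq_of_lintegral_ofReal (by fun_prop) ae_nonneg_gammaMeasure
    (div_pos ha hr).le ?_
  rw [gammaMeasure, lintegral_withDensity_eq_lintegral_mul _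
    (measurable_gammaPDF a r) (by fun_prop)]
  have hpdf : ∀ x, gammaPDF a r x * ENNReal.ofReal x =
      ENNReal.ofReal (a / r) * gammaPDF (a + 1) r x := fun x => by
    rw [gammaPDF, gammaPDF, ← ENNReal.ofReal_mul (gammaPDFReal_nonneg ha hr x),
      gammaPDFReal_mul_self ha hr, ENNReal.ofReal_mul (div_pos ha hr).le]
  simp_rw [Pi.mul_apply, hpdf]
  rw [lintegral_const_mul _ (measurable_gammaPDF (a + 1) r),
    lintegral_gammaPDF_eq_one (by linarith) hr, mul_one]

lemma erealExp_gammaMeasure (ha : 0 < a) (hr : 0 < r) :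
    erealExp (gammaMeasure a r) = ((a / r : ℝ) : EReal) := by
  rw [erealExp_eq_integral ae_nonneg_gammaMeasure (integrable_and_integral_id_gammaMeasure ha hr).1,
    (integrable_and_integral_id_gammaMeasure ha hr).2]

lemma tilted_gammaMeasure (ha : 0 < a) (hr : 0 < r) (hl : l < r) :
    (gammaMeasure a r).tilted (fun x => l * x) = gammaMeasure a (r - l) := by
  have hc : 0 < (r / (r - l)) ^ a := rpow_pos_of_pos (div_pos hr (sub_pos.2 hl)) a
  rw [Measure.tilted, (integrable_and_integral_exp_gammaMeasure ha hr hl).2, gammaMeasure,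
    gammaMeasure, ← withDensity_mul₀ (measurable_gammaPDF a r).aemeasurable (by fun_prop)]
  congr 1
  funext x
  rw [Pi.mul_apply, gammaPDF, gammaPDF, ← ENNReal.ofReal_mul (gammaPDFReal_nonneg ha hr x),
    ← mul_div_assoc, gammaPDFReal_mul_exp hr hl, mul_div_cancel_left₀ _ hc.ne']

lemma klDiv_gammaMeasure (ha : 0 < a) (hr : 0 < r) {s : ℝ} (hs : 0 < s) :
    klDiv (gammaMeasure a s) (gammaMeasure a r) =
      ((a * (r / s - 1 - log (r / s)) : ℝ) : EReal) := by
  have hl : r - s < r := by linarith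
  have htilt : (gammaMeasure a r).tilted (fun x => (r - s) * x) = gammaMeasure a s := by
    rw [tilted_gammaMeasure ha hr hl, sub_sub_cancel]
  obtain ⟨hexp_int, hexp⟩ := integrable_and_integral_exp_gammaMeasure ha hr hl
  obtain ⟨hmean_int, hmean⟩ := integrable_and_integral_id_gammaMeasure ha hs
  have := isProbabilityMeasure_gammaMeasure ha hr
  rw [← htilt, klDiv_tilted hexp_int (htilt ▸ hmean_int.const_mul _), htilt, integral_const_mul,
    hmean, hexp, sub_sub_cancel, log_rpow (div_pos hr hs)]
  congr 1
  field_simp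

theorem stability_gammaMeasure (ha : 0 < a) (hr : 0 < r) {y : ℝ} (hy : a / r ≤ y) :
    stability y (gammaMeasure a r) = klDiv (gammaMeasure a (a / y)) (gammaMeasure a r) := by
  have hy0 : 0 < y := (div_pos ha hr).trans_le hy
  have hl : 0 ≤ r - a / y := by
    rw [sub_nonneg, div_le_iff₀ hy0]
    rwa [div_le_iff₀ hr, mul_comm] at hy
  have hlr : r - a / y < r := sub_lt_self r (div_pos ha hy0)
  have htilt :
      (gammaMeasure a r).tilted (fun x => (r - a / y) * x) = gammaMeasure a (a / y) := by
    rw [tilted_gammaMeasure ha hr hlr, sub_sub_cancel]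
  obtain ⟨hmean_int, hmean⟩ := integrable_and_integral_id_gammaMeasure ha (div_pos ha hy0)
  have := isProbabilityMeasure_gammaMeasure ha hr
  rw [stability_eq_klDiv_tilted ae_nonneg_gammaMeasure hl
    (integrable_and_integral_exp_gammaMeasure ha hr hlr).1 (htilt ▸ hmean_int)
    (by rw [htilt, hmean, div_div_cancel₀ ha.ne']), htilt]

lemma dualObj_gammaMeasure_of_lt (ha : 0 < a) (hr : 0 < r) (hl : l < r) (y : ℝ) :
    dualObj y (gammaMeasure a r) l = ((l * y - a * log (r / (r - l)) : ℝ) : EReal) := by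
  have hc : 0 < r / (r - l) := div_pos hr (sub_pos.2 hl)
  rw [dualObj, expMoment_gammaMeasure_of_lt ha hr hl,
    ENNReal.log_ofReal_of_pos (rpow_pos_of_pos hc a), log_rpow hc, ← EReal.coe_sub]

lemma mul_sub_mul_log_div_le (ha : 0 < a) (hr : 0 < r) (hl : l < r) {y : ℝ} (hy : 0 < y) :
    l * y - a * log (r / (r - l)) ≤ (r - a / y) * y - a * log (r / (r - (r - a / y))) := by
  have hrl : 0 < r - l := sub_pos.2 hl
  -- with `t = (r - λ) y / a`, the gap is `a (t - 1 - log t) ≥ 0`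
  have hlog := log_le_sub_one_of_pos (show 0 < (r - l) * y / a by positivity)
  rw [log_div (by positivity) ha.ne', log_mul hrl.ne' hy.ne'] at hlog
  rw [sub_sub_cancel, log_div hr.ne' hrl.ne', log_div hr.ne' (div_pos ha hy).ne',
    log_div ha.ne' hy.ne']
  have hgap : a * ((r - l) * y / a - 1) = (r - l) * y - a := by field_simp
  have hstar : (r - a / y) * y = r * y - a := by field_simp
  linarith [mul_le_mul_of_nonneg_left hlog ha.le]

theorem isMaxOn_dualObj_gammaMeasure (ha : 0 < a) (hr : 0 < r) {y : ℝ} (hy : 0 < y) :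
    IsMaxOn (dualObj y (gammaMeasure a r)) univ (r - a / y) := by
  refine isMaxOn_iff.2 fun l _ => ?_
  rw [dualObj_gammaMeasure_of_lt ha hr (sub_lt_self r (div_pos ha hy))]
  rcases lt_or_ge l r with hl | hl
  · rw [dualObj_gammaMeasure_of_lt ha hr hl, EReal.coe_le_coe_iff]
    exact mul_sub_mul_log_div_le ha hr hl hy
  · rw [dualObj, expMoment_gammaMeasure_of_le ha hr hl, ENNReal.log_top, EReal.sub_top]
    exact bot_le

end Gamma

/-- For `P = χ²_k = Gamma(k/2, 1/2)` and `y ≥ k`: the dual maximizer is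
`λ* = (1 − k/y)/2`, the stability is `I_y(P) = (1/2)(y − k + k log(k/y))`, and the infimum
defining `I_y(P)` is attained at `Q* = Gamma(k/2, k/(2y))` (shape `k/2`, rate `k/(2y)`). -/
theorem stability_chiSquared (k : ℕ) (hk : 1 ≤ k) (y : ℝ) (hy : (k : ℝ) ≤ y) :
    IsMaxOn (dualObj y (gammaMeasure (k / 2 : ℝ) (1 / 2))) Set.univ ((1 - k / y) / 2) ∧
    stability y (gammaMeasure (k / 2 : ℝ) (1 / 2)) =
      ((1 / 2 * (y - k + k * Real.log (k / y)) : ℝ) : EReal) ∧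
    (y : EReal) ≤ erealExp (gammaMeasure (k / 2 : ℝ) (k / (2 * y))) ∧
    klDiv (gammaMeasure (k / 2 : ℝ) (k / (2 * y))) (gammaMeasure (k / 2 : ℝ) (1 / 2)) =
      stability y (gammaMeasure (k / 2 : ℝ) (1 / 2)) := by
  have hk0 : (0 : ℝ) < k := by exact_mod_cast hk
  have hy0 : 0 < y := hk0.trans_le hy
  have ha : (0 : ℝ) < k / 2 := by positivity
  have hr : (0 : ℝ) < 1 / 2 := by norm_num
  have hs : (k : ℝ) / (2 * y) = k / 2 / y := by ring
  have hstar : (1 - k / y) / 2 = 1 / 2 - k / 2 / y := by ring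
  have hstab := stability_gammaMeasure ha hr (show (k / 2 : ℝ) / (1 / 2) ≤ y by linarith)
  have hvalue : (k / 2 : ℝ) * (1 / 2 / (k / 2 / y) - 1 - log (1 / 2 / (k / 2 / y))) =
      1 / 2 * (y - k + k * log (k / y)) := by
    rw [show (1 / 2 : ℝ) / (k / 2 / y) = (k / y)⁻¹ by field_simp, log_inv]
    field_simp
    ring
  rw [hs, hstar]
  refine ⟨isMaxOn_dualObj_gammaMeasure ha hr hy0, ?_, ?_, hstab.symm⟩
  · rw [hstab, klDiv_gammaMeasure ha hr (div_pos ha hy0), hvalue]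
  · rw [erealExp_gammaMeasure ha (div_pos ha hy0), div_div_cancel₀ ha.ne']

end Stab
end
end

section
/- In the moderate-deviations construction, if 0 < ω ≤ min{ (1−γ)/(σ y), (2 − σ y)/(σ y) } with 1 < σ y < 2γ and γ ∈ (1/2, 1), then both P₁ and P₂ belong to the class P_{σ,y,γ}. -/
open MeasureTheory ProbabilityTheory Real Set
open scoped ENNReal NNReal

noncomputable section

namespace Stab

/-- `P₂` in the moderate-deviations construction. -/
def mdP2 (σ ω x₀ : ℝ) : Measure ℝ :=
  volume.withDensity fun x =>
    if x < 0 then 0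
    else if x ≤ x₀ then ENNReal.ofReal (σ * (1 + ω) * Real.exp (-(σ * (1 + ω)) * x))
    else ENNReal.ofReal (σ * Real.exp (-(σ * ω * x₀)) * Real.exp (-σ * x))

/-!
Both laws are piecewise exponential: density `α e^{-α x}` on `[0, x₀]` (with `α = σ` for `P₁`
and `α = σ (1 + ω)` for `P₂`) followed by an `Exp(σ)`-shaped tail, glued continuously at `x₀`.
For `λ < σ` the moment generating function is the convex combination
`M(λ) = α/(α-λ) (1 - e^{(λ-α) x₀}) + σ/(σ-λ) e^{(λ-α) x₀}` of those of `Exp(α)` and `Exp(σ)`,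
hence at most `σ/(σ-λ)` for `λ ≥ 0`; it is infinite for `λ ≥ σ`, and the mean bound follows
from `1 + λ x ≤ e^{λ x}`. For the dual maximiser, `λ ↦ M(λ) (α - λ)` is nondecreasing on
`[0, σ)` and `e^{(λ-m) y} ≤ (α-m)/(α-λ)` for `m ≤ λ` as soon as `(α - m) y ≤ 1`; so the dual
objective `λ y - log M(λ)` does not increase beyond `m = σ - γ/y`. Since it tends to `-∞` as
`λ → -∞`, it attains its maximum, at some `λ ≤ m`. The condition `(α - m) y ≤ 1` reads `γ ≤ 1`
for `P₁` and `σ ω y + γ ≤ 1` for `P₂`.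
-/

open Filter Topology

def pwExpDensity (σ α x₀ x : ℝ) : ℝ≥0∞ :=
  if x < 0 then 0
  else if x ≤ x₀ then ENNReal.ofReal (α * Real.exp (-α * x))
  else ENNReal.ofReal (σ * Real.exp ((σ - α) * x₀) * Real.exp (-σ * x))

def pwExpMeasure (σ α x₀ : ℝ) : Measure ℝ := volume.withDensity (pwExpDensity σ α x₀)

def pwExpMgf (σ α x₀ l : ℝ) : ℝ :=
  α / (α - l) * (1 - Real.exp ((l - α) * x₀)) + σ / (σ - l) * Real.exp ((l - α) * x₀)

def pwExpDual (y σ α x₀ l : ℝ) : ℝ := l * y - Real.log (pwExpMgf σ α x₀ l)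

lemma expMeasure_eq_pwExpMeasure (σ x₀ : ℝ) : expMeasure σ = pwExpMeasure σ σ x₀ := by
  rw [expMeasure, gammaMeasure, pwExpMeasure]
  congr 1
  funext x
  simp only [gammaPDF_eq, Real.rpow_one, Real.Gamma_one, div_one, sub_self, Real.rpow_zero,
    mul_one, zero_mul, Real.exp_zero, neg_mul, pwExpDensity]
  by_cases hx : x < 0
  · simp [hx, not_le.mpr hx]
  · simp [hx, le_of_not_gt hx]

lemma mdP2_eq_pwExpMeasure (σ ω x₀ : ℝ) : mdP2 σ ω x₀ = pwExpMeasure σ (σ * (1 + ω)) x₀ := by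
  have h : -(σ * ω * x₀) = (σ - σ * (1 + ω)) * x₀ := by ring
  simp only [mdP2, h]
  rfl

lemma measurable_pwExpDensity (σ α x₀ : ℝ) : Measurable (pwExpDensity σ α x₀) :=
  Measurable.ite measurableSet_Iio measurable_const
    (Measurable.ite measurableSet_Iic (by fun_prop) (by fun_prop))

lemma lintegral_pwExpMeasure {σ α x₀ : ℝ} (hx₀ : 0 ≤ x₀) {g : ℝ → ℝ≥0∞} (hg : Measurable g) :
    ∫⁻ x, g x ∂pwExpMeasure σ α x₀ =
      (∫⁻ x in Icc 0 x₀, ENNReal.ofReal (α * Real.exp (-α * x)) * g x) +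
        ∫⁻ x in Ioi x₀, ENNReal.ofReal (σ * Real.exp ((σ - α) * x₀) * Real.exp (-σ * x)) * g x := by
  rw [pwExpMeasure, lintegral_withDensity_eq_lintegral_mul _ (measurable_pwExpDensity σ α x₀) hg,
    ← lintegral_add_compl _ (measurableSet_Ici (a := 0)), compl_Ici, ← Icc_union_Ioi_eq_Ici hx₀,
    lintegral_union measurableSet_Ioi ((Iic_disjoint_Ioi le_rfl).mono_left Icc_subset_Iic_self),
    setLIntegral_congr_fun measurableSet_Iio (g := fun _ => 0) fun x (hx : x < 0) => by
      simp [pwExpDensity, hx], lintegral_zero, add_zero]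
  congr 1
  · refine setLIntegral_congr_fun measurableSet_Icc fun x hx => ?_
    simp [pwExpDensity, hx.2, not_lt.mpr hx.1]
  · refine setLIntegral_congr_fun measurableSet_Ioi fun x (hx : x₀ < x) => ?_
    simp [pwExpDensity, not_lt.mpr (hx₀.trans hx.le), not_le.mpr hx]

lemma ae_nonneg_pwExpMeasure (σ α x₀ : ℝ) : ∀ᵐ x ∂pwExpMeasure σ α x₀, 0 ≤ x := by
  rw [pwExpMeasure, ae_withDensity_iff (measurable_pwExpDensity σ α x₀)]
  refine ae_of_all _ fun x hx => not_lt.mp fun hneg => hx ?_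
  simp [pwExpDensity, hneg]

lemma setLIntegral_Icc_ofReal_mul_exp {a b c k : ℝ} (hab : a ≤ b) (hc : 0 ≤ c) (hk : k ≠ 0) :
    ∫⁻ x in Icc a b, ENNReal.ofReal (c * Real.exp (k * x)) =
      ENNReal.ofReal (c * ((Real.exp (k * b) - Real.exp (k * a)) / k)) := by
  rw [← ofReal_integral_eq_lintegral_ofReal (by fun_prop : Continuous fun x => _).integrableOn_Icc
      (ae_of_all _ fun x => by positivity), integral_Icc_eq_integral_Ioc,
    ← intervalIntegral.integral_of_le hab, intervalIntegral.integral_const_mul]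
  congr 2
  simp_rw [mul_comm k]
  rw [intervalIntegral.integral_comp_mul_right (fun x => Real.exp x) hk, integral_exp, smul_eq_mul]
  field_simp

lemma setLIntegral_Ioi_ofReal_mul_exp {a c k : ℝ} (hc : 0 ≤ c) (hk : k < 0) :
    ∫⁻ x in Ioi a, ENNReal.ofReal (c * Real.exp (k * x)) =
      ENNReal.ofReal (c * (-Real.exp (k * a) / k)) := by
  rw [← ofReal_integral_eq_lintegral_ofReal ((integrableOn_exp_mul_Ioi hk a).const_mul c)
      (ae_of_all _ fun x => by positivity), integral_const_mul, integral_exp_mul_Ioi hk]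

lemma ofReal_mul_exp_mul_ofReal_exp {c : ℝ} (hc : 0 ≤ c) (a b x : ℝ) :
    ENNReal.ofReal (c * Real.exp (a * x)) * ENNReal.ofReal (Real.exp (b * x)) =
      ENNReal.ofReal (c * Real.exp ((a + b) * x)) := by
  rw [← ENNReal.ofReal_mul (by positivity), mul_assoc, ← Real.exp_add, add_mul]

section PiecewiseExp

variable {σ α x₀ : ℝ}

lemma expMoment_pwExpMeasure (hσ : 0 < σ) (hα : σ ≤ α) (hx₀ : 0 ≤ x₀) {l : ℝ} (hl : l < σ) :
    expMoment (pwExpMeasure σ α x₀) l = ENNReal.ofReal (pwExpMgf σ α x₀ l) := by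
  have hα0 : 0 < α := hσ.trans_le hα
  rw [expMoment, lintegral_pwExpMeasure hx₀ (by fun_prop)]
  simp_rw [ofReal_mul_exp_mul_ofReal_exp hα0.le,
    ofReal_mul_exp_mul_ofReal_exp (c := σ * Real.exp ((σ - α) * x₀)) (by positivity)]
  rw [setLIntegral_Icc_ofReal_mul_exp hx₀ hα0.le (by linarith),
    setLIntegral_Ioi_ofReal_mul_exp (by positivity) (by linarith), ← ENNReal.ofReal_add]
  · congr 1
    have hexp : Real.exp ((σ - α) * x₀) * Real.exp ((-σ + l) * x₀) = Real.exp ((-α + l) * x₀) := by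
      rw [← Real.exp_add]; ring_nf
    have h1 : -α + l ≠ 0 := by linarith
    have h2 : -σ + l ≠ 0 := by linarith
    have h3 : α - l ≠ 0 := by linarith
    have h4 : σ - l ≠ 0 := by linarith
    rw [mul_zero, Real.exp_zero, pwExpMgf, show (l - α) * x₀ = (-α + l) * x₀ by ring, ← hexp]
    field_simp
    ring
  · refine mul_nonneg hα0.le (div_nonneg_of_nonpos ?_ (by linarith))
    exact sub_nonpos.mpr (Real.exp_le_exp.mpr (by nlinarith))
  · exact mul_nonneg (by positivity)
      (div_nonneg_of_nonpos (neg_nonpos.mpr (Real.exp_pos _).le) (by linarith))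

lemma expMoment_pwExpMeasure_eq_top (hσ : 0 < σ) (hx₀ : 0 ≤ x₀) {l : ℝ} (hl : σ ≤ l) :
    expMoment (pwExpMeasure σ α x₀) l = ⊤ := by
  have hc : 0 < σ * Real.exp ((σ - α) * x₀) := by positivity
  rw [expMoment, lintegral_pwExpMeasure hx₀ (by fun_prop), eq_top_iff]
  calc ⊤ = ∫⁻ _ in Ioi x₀, ENNReal.ofReal (σ * Real.exp ((σ - α) * x₀)) := by
        rw [setLIntegral_const, Real.volume_Ioi, ENNReal.mul_top (ENNReal.ofReal_pos.mpr hc).ne']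
    _ ≤ ∫⁻ x in Ioi x₀, ENNReal.ofReal (σ * Real.exp ((σ - α) * x₀) * Real.exp (-σ * x)) *
          ENNReal.ofReal (Real.exp (l * x)) := by
        refine setLIntegral_mono' measurableSet_Ioi fun x (hx : x₀ < x) => ?_
        rw [ofReal_mul_exp_mul_ofReal_exp hc.le]
        exact ENNReal.ofReal_le_ofReal (le_mul_of_one_le_right hc.le
          (Real.one_le_exp (mul_nonneg (by linarith) (by linarith))))
    _ ≤ _ := le_add_self

lemma pwExpMgf_zero (hσ : σ ≠ 0) (hα : α ≠ 0) : pwExpMgf σ α x₀ 0 = 1 := by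
  rw [pwExpMgf, sub_zero, sub_zero, div_self hα, div_self hσ]
  ring

lemma isProbabilityMeasure_pwExpMeasure (hσ : 0 < σ) (hα : σ ≤ α) (hx₀ : 0 ≤ x₀) :
    IsProbabilityMeasure (pwExpMeasure σ α x₀) := by
  have h := expMoment_pwExpMeasure hσ hα hx₀ hσ
  rw [pwExpMgf_zero hσ.ne' (hσ.trans_le hα).ne'] at h
  simpa [expMoment, isProbabilityMeasure_iff] using h

lemma exp_sub_mul_le_one (hx₀ : 0 ≤ x₀) {l : ℝ} (hl : l ≤ α) : Real.exp ((l - α) * x₀) ≤ 1 :=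
  Real.exp_le_one_iff.mpr (mul_nonpos_of_nonpos_of_nonneg (sub_nonpos.mpr hl) hx₀)

lemma pwExpMgf_pos (hσ : 0 < σ) (hα : σ ≤ α) (hx₀ : 0 ≤ x₀) {l : ℝ} (hl : l < σ) :
    0 < pwExpMgf σ α x₀ l :=
  add_pos_of_nonneg_of_pos
    (mul_nonneg (div_nonneg (by linarith) (by linarith))
      (sub_nonneg.mpr (exp_sub_mul_le_one hx₀ (hl.le.trans hα))))
    (mul_pos (div_pos hσ (by linarith)) (Real.exp_pos _))

lemma pwExpMgf_le (hα : σ ≤ α) (hx₀ : 0 ≤ x₀) {l : ℝ} (hl0 : 0 ≤ l) (hl : l < σ) :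
    pwExpMgf σ α x₀ l ≤ σ / (σ - l) := by
  have hrate : α / (α - l) ≤ σ / (σ - l) := by
    rw [div_le_div_iff₀ (by linarith) (by linarith)]
    nlinarith
  have hT := exp_sub_mul_le_one hx₀ (hl.le.trans hα)
  calc pwExpMgf σ α x₀ l
      ≤ σ / (σ - l) * (1 - Real.exp ((l - α) * x₀)) + σ / (σ - l) * Real.exp ((l - α) * x₀) := by
        rw [pwExpMgf]; gcongr
    _ = σ / (σ - l) := by ring

lemma pwExpMgf_mul_sub (hα : σ ≤ α) {l : ℝ} (hl : l < σ) :
    pwExpMgf σ α x₀ l * (α - l) = α + Real.exp ((l - α) * x₀) * (l * (α - σ) / (σ - l)) := by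
  have h1 : α - l ≠ 0 := by linarith
  have h2 : σ - l ≠ 0 := by linarith
  rw [pwExpMgf]
  field_simp
  ring

lemma monotoneOn_pwExpMgf_mul_sub (hα : σ ≤ α) (hx₀ : 0 ≤ x₀) :
    MonotoneOn (fun l => pwExpMgf σ α x₀ l * (α - l)) (Ico 0 σ) := by
  rintro m ⟨hm0, hmσ⟩ l ⟨-, hlσ⟩ hml
  simp only [pwExpMgf_mul_sub hα hmσ, pwExpMgf_mul_sub hα hlσ]
  have hT : Real.exp ((m - α) * x₀) ≤ Real.exp ((l - α) * x₀) := by gcongr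
  have hk : m * (α - σ) / (σ - m) ≤ l * (α - σ) / (σ - l) := by
    have hασ : 0 ≤ α - σ := sub_nonneg.mpr hα
    exact div_le_div₀ (mul_nonneg (hm0.trans hml) hασ) (mul_le_mul_of_nonneg_right hml hασ)
      (by linarith) (by linarith)
  gcongr

lemma continuousOn_pwExpMgf (hα : σ ≤ α) : ContinuousOn (pwExpMgf σ α x₀) (Iio σ) := by
  intro l (hl : l < σ)
  have h1 : α - l ≠ 0 := by linarith
  have h2 : σ - l ≠ 0 := by linarith
  refine ContinuousAt.continuousWithinAt ?_
  unfold pwExpMgf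
  fun_prop (disch := assumption)

end PiecewiseExp

lemma lintegral_ofReal_le_of_expMoment_le {P : Measure ℝ} [IsProbabilityMeasure P] {σ : ℝ}
    (hσ : 0 < σ) (h0 : ∀ᵐ x ∂P, 0 ≤ x)
    (hM : ∀ l : ℝ, 0 ≤ l → l < σ → expMoment P l ≤ ENNReal.ofReal (σ / (σ - l))) :
    ∫⁻ x, ENNReal.ofReal x ∂P ≤ ENNReal.ofReal (1 / σ) := by
  have hbound : ∀ l ∈ Ioo 0 σ, ∫⁻ x, ENNReal.ofReal x ∂P ≤ ENNReal.ofReal (1 / (σ - l)) := by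
    rintro l ⟨hl0, hlσ⟩
    have hσl : 0 < σ - l := by linarith
    have key : ENNReal.ofReal l * ∫⁻ x, ENNReal.ofReal x ∂P + 1 ≤
        ENNReal.ofReal l * ENNReal.ofReal (1 / (σ - l)) + 1 :=
      calc ENNReal.ofReal l * ∫⁻ x, ENNReal.ofReal x ∂P + 1
          = ∫⁻ x, ENNReal.ofReal (l * x) + 1 ∂P := by
            rw [lintegral_add_right _ measurable_const, ← lintegral_const_mul _ (by fun_prop),
              lintegral_one, measure_univ]
            simp_rw [ENNReal.ofReal_mul hl0.le]
        _ ≤ expMoment P l := by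
            refine lintegral_mono_ae (h0.mono fun x hx => ?_)
            rw [← ENNReal.ofReal_one, ← ENNReal.ofReal_add (by positivity) zero_le_one]
            exact ENNReal.ofReal_le_ofReal (by linarith [Real.add_one_le_exp (l * x)])
        _ ≤ ENNReal.ofReal (σ / (σ - l)) := hM l hl0.le hlσ
        _ = ENNReal.ofReal l * ENNReal.ofReal (1 / (σ - l)) + 1 := by
            rw [← ENNReal.ofReal_mul hl0.le, ← ENNReal.ofReal_one,
              ← ENNReal.ofReal_add (by positivity) zero_le_one]
            congr 1
            field_simp
            ring
    exact (ENNReal.mul_le_mul_iff_right (ENNReal.ofReal_pos.mpr hl0).ne' ENNReal.ofReal_ne_top).mp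
      ((ENNReal.add_le_add_iff_right ENNReal.one_ne_top).mp key)
  have htend : Tendsto (fun l => ENNReal.ofReal (1 / (σ - l))) (𝓝[>] 0)
      (𝓝 (ENNReal.ofReal (1 / σ))) := by
    have hcont : ContinuousAt (fun l : ℝ => 1 / (σ - l)) 0 :=
      continuousAt_const.div (continuousAt_const.sub continuousAt_id) (by simpa using hσ.ne')
    simpa using (ENNReal.tendsto_ofReal hcont.tendsto).mono_left nhdsWithin_le_nhds
  exact ge_of_tendsto htend (mem_of_superset (Ioo_mem_nhdsGT hσ) hbound)

lemma exists_isMaxOn_Iic {f : ℝ → ℝ} {m : ℝ} (hf : ContinuousOn f (Iic m))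
    (hbot : Tendsto f atBot atBot) : ∃ l ≤ m, IsMaxOn f (Iic m) l := by
  obtain ⟨b, hb⟩ := eventually_atBot.mp (hbot.eventually (eventually_le_atBot (f m)))
  obtain ⟨l, hl, hmax⟩ := isCompact_Icc.exists_isMaxOn (nonempty_Icc.mpr (min_le_right b m))
    (hf.mono Icc_subset_Iic_self)
  refine ⟨l, hl.2, fun x (hx : x ≤ m) => ?_⟩
  rcases le_total x (min b m) with hxb | hxb
  · exact (hb x (hxb.trans (min_le_left _ _))).trans (hmax ⟨min_le_right _ _, le_rfl⟩)
  · exact hmax ⟨hxb, hx⟩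

section PiecewiseExpDual

variable {y σ α x₀ : ℝ}

lemma continuousOn_pwExpDual (hσ : 0 < σ) (hα : σ ≤ α) (hx₀ : 0 ≤ x₀) :
    ContinuousOn (pwExpDual y σ α x₀) (Iio σ) :=
  (continuousOn_id.mul continuousOn_const).sub
    ((continuousOn_pwExpMgf hα).log fun _ hl => (pwExpMgf_pos hσ hα hx₀ hl).ne')

lemma pwExpDual_le_of_le (hσ : 0 < σ) (hα : σ ≤ α) (hx₀ : 0 ≤ x₀) {m l : ℝ} (hm0 : 0 ≤ m)
    (hml : m ≤ l) (hl : l < σ) (hy : (α - m) * y ≤ 1) :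
    pwExpDual y σ α x₀ l ≤ pwExpDual y σ α x₀ m := by
  have hαl : 0 < α - l := by linarith
  have hαm : 0 < α - m := by linarith
  have hMm := pwExpMgf_pos hσ hα hx₀ (hml.trans_lt hl)
  have hexp : Real.exp ((l - m) * y) ≤ (α - m) / (α - l) := by
    have ht : (l - m) * y ≤ (l - m) / (α - m) := by
      rw [le_div_iff₀ hαm]
      nlinarith
    calc Real.exp ((l - m) * y) ≤ Real.exp ((l - m) / (α - m)) := Real.exp_le_exp.mpr ht
      _ ≤ 1 / (1 - (l - m) / (α - m)) := Real.exp_bound_div_one_sub_of_interval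
          (div_nonneg (by linarith) hαm.le) ((div_lt_one hαm).mpr (by linarith))
      _ = (α - m) / (α - l) := by rw [one_sub_div hαm.ne', one_div_div]; congr 1; ring
  have hM : pwExpMgf σ α x₀ m * Real.exp ((l - m) * y) ≤ pwExpMgf σ α x₀ l :=
    calc pwExpMgf σ α x₀ m * Real.exp ((l - m) * y)
        ≤ pwExpMgf σ α x₀ m * (α - m) / (α - l) := by
          rw [mul_div_assoc]; gcongr
      _ ≤ pwExpMgf σ α x₀ l := by
          rw [div_le_iff₀ hαl]
          exact monotoneOn_pwExpMgf_mul_sub hα hx₀ ⟨hm0, hml.trans_lt hl⟩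
            ⟨hm0.trans hml, hl⟩ hml
  have hlog := Real.log_le_log (by positivity) hM
  rw [Real.log_mul hMm.ne' (Real.exp_pos _).ne', Real.log_exp] at hlog
  unfold pwExpDual
  linarith

lemma pwExpMgf_ge_of_nonpos (hσ : 0 < σ) (hα : σ ≤ α) (hx₀ : 0 ≤ x₀) {l : ℝ} (hl : l ≤ 0) :
    α * (1 - Real.exp (-(α * x₀))) / (α - l) ≤ pwExpMgf σ α x₀ l := by
  have hT : Real.exp ((l - α) * x₀) ≤ Real.exp (-(α * x₀)) := Real.exp_le_exp.mpr (by nlinarith)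
  calc α * (1 - Real.exp (-(α * x₀))) / (α - l)
      = α / (α - l) * (1 - Real.exp (-(α * x₀))) := by ring
    _ ≤ α / (α - l) * (1 - Real.exp ((l - α) * x₀)) :=
        mul_le_mul_of_nonneg_left (by linarith) (div_nonneg (by linarith) (by linarith))
    _ ≤ pwExpMgf σ α x₀ l :=
        le_add_of_nonneg_right (mul_nonneg (div_nonneg hσ.le (by linarith)) (Real.exp_pos _).le)

lemma tendsto_pwExpDual_atBot (hσ : 0 < σ) (hα : σ ≤ α) (hx₀ : 0 < x₀) (hy : 0 < y) :
    Tendsto (pwExpDual y σ α x₀) atBot atBot := by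
  have hα0 : 0 < α := hσ.trans_le hα
  set c := α * (1 - Real.exp (-(α * x₀)))
  have hc0 : 0 < c := mul_pos hα0 (sub_pos.mpr (Real.exp_lt_one_iff.mpr (by nlinarith)))
  -- from `pwExpMgf σ α x₀ l ≥ c / (α - l)` and `log t ≤ t - 1` at `t = (α - l) y / 2`
  have hbound : ∀ l ≤ 0, pwExpDual y σ α x₀ l ≤
      l * (y / 2) + (α * (y / 2) - 1 - Real.log (y / 2) - Real.log c) := by
    intro l hl
    have hαl : 0 < α - l := by linarith
    have hlogM := Real.log_le_log (by positivity) (pwExpMgf_ge_of_nonpos hσ hα hx₀.le hl)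
    have hlog := Real.log_le_sub_one_of_pos (mul_pos hαl (half_pos hy))
    rw [Real.log_div hc0.ne' hαl.ne'] at hlogM
    rw [Real.log_mul hαl.ne' (half_pos hy).ne'] at hlog
    unfold pwExpDual
    linarith
  refine tendsto_atBot_mono' _ ?_ (tendsto_atBot_add_const_right _
    (α * (y / 2) - 1 - Real.log (y / 2) - Real.log c) (tendsto_id.atBot_mul_const (half_pos hy)))
  filter_upwards [eventually_le_atBot 0] with l hl using hbound l hl

lemma dualObj_pwExpMeasure_of_lt (hσ : 0 < σ) (hα : σ ≤ α) (hx₀ : 0 ≤ x₀) {l : ℝ}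
    (hl : l < σ) : dualObj y (pwExpMeasure σ α x₀) l = (pwExpDual y σ α x₀ l : EReal) := by
  rw [dualObj, expMoment_pwExpMeasure hσ hα hx₀ hl,
    ENNReal.log_ofReal_of_pos (pwExpMgf_pos hσ hα hx₀ hl), pwExpDual, EReal.coe_sub]

lemma dualObj_pwExpMeasure_of_le (hσ : 0 < σ) (hx₀ : 0 ≤ x₀) {l : ℝ} (hl : σ ≤ l) :
    dualObj y (pwExpMeasure σ α x₀) l = ⊥ := by
  rw [dualObj, expMoment_pwExpMeasure_eq_top hσ hx₀ hl, ENNReal.log_top, EReal.sub_top]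

lemma exists_isMaxOn_dualObj_pwExpMeasure (hσ : 0 < σ) (hα : σ ≤ α) (hx₀ : 0 < x₀) (hy : 0 < y)
    {m : ℝ} (hm0 : 0 ≤ m) (hmσ : m < σ) (hkey : (α - m) * y ≤ 1) :
    ∃ l, IsMaxOn (dualObj y (pwExpMeasure σ α x₀)) univ l ∧ l ≤ m := by
  obtain ⟨l₀, hl₀m, hmax⟩ := exists_isMaxOn_Iic
    ((continuousOn_pwExpDual hσ hα hx₀.le).mono (Iic_subset_Iio.mpr hmσ))
    (tendsto_pwExpDual_atBot hσ hα hx₀ hy)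
  refine ⟨l₀, fun l _ => ?_, hl₀m⟩
  change dualObj y _ l ≤ dualObj y _ l₀
  rw [dualObj_pwExpMeasure_of_lt hσ hα hx₀.le (hl₀m.trans_lt hmσ)]
  rcases lt_or_ge l σ with hlσ | hσl
  · rw [dualObj_pwExpMeasure_of_lt hσ hα hx₀.le hlσ, EReal.coe_le_coe_iff]
    rcases le_total l m with hlm | hml
    · exact hmax hlm
    · exact (pwExpDual_le_of_le hσ hα hx₀.le hm0 hml hlσ hkey).trans (hmax (le_refl m))
  · rw [dualObj_pwExpMeasure_of_le hσ hx₀.le hσl]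
    exact bot_le

end PiecewiseExpDual

lemma pwExpMeasure_mem_Pclass {σ α x₀ y γ : ℝ} (hσ : 0 < σ) (hα : σ ≤ α) (hx₀ : 0 < x₀)
    (hy : 0 < y) (hγ : 0 < γ) (hγσ : γ ≤ σ * y) (hkey : (α - σ) * y + γ ≤ 1) :
    pwExpMeasure σ α x₀ ∈ Pclass σ y γ := by
  have hprob := isProbabilityMeasure_pwExpMeasure hσ hα hx₀.le
  have hM : ∀ l : ℝ, 0 ≤ l → l < σ →
      expMoment (pwExpMeasure σ α x₀) l ≤ ENNReal.ofReal (σ / (σ - l)) := fun l hl0 hl => by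
    rw [expMoment_pwExpMeasure hσ hα hx₀.le hl]
    exact ENNReal.ofReal_le_ofReal (pwExpMgf_le hα hx₀.le hl0 hl)
  have hm0 : 0 ≤ σ - γ / y := sub_nonneg.mpr ((div_le_iff₀ hy).mpr hγσ)
  have hkey' : (α - (σ - γ / y)) * y ≤ 1 := by
    rwa [sub_sub_eq_add_sub, add_sub_right_comm, add_mul, div_mul_cancel₀ _ hy.ne']
  exact ⟨hprob, ae_nonneg_pwExpMeasure σ α x₀, expMoment_pwExpMeasure_eq_top hσ hx₀.le le_rfl, hM,
    lintegral_ofReal_le_of_expMoment_le hσ (ae_nonneg_pwExpMeasure σ α x₀) hM,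
    exists_isMaxOn_dualObj_pwExpMeasure hσ hα hx₀ hy hm0 (sub_lt_self σ (div_pos hγ hy)) hkey'⟩

theorem md_class_inclusion_general (σ y γ ω x₀ : ℝ) (hσ : 0 < σ) (hx₀ : 0 < x₀)
    (hγ : γ ∈ Set.Ioo (1 / 2 : ℝ) 1) (hσy1 : 1 < σ * y)
    (hω0 : 0 < ω) (hω : ω ≤ min ((1 - γ) / (σ * y)) ((2 - σ * y) / (σ * y))) :
    expMeasure σ ∈ Pclass σ y γ ∧ mdP2 σ ω x₀ ∈ Pclass σ y γ := by
  obtain ⟨hγ0, hγ1⟩ := hγ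
  have hy : 0 < y := pos_of_mul_pos_right (by linarith) hσ.le
  have hωσy : ω * (σ * y) ≤ 1 - γ :=
    (le_div_iff₀ (by positivity)).mp (hω.trans (min_le_left _ _))
  rw [expMeasure_eq_pwExpMeasure σ x₀, mdP2_eq_pwExpMeasure]
  constructor
  · exact pwExpMeasure_mem_Pclass hσ le_rfl hx₀ hy (by linarith) (by linarith) (by linarith)
  · exact pwExpMeasure_mem_Pclass hσ (by nlinarith) hx₀ hy (by linarith) (by linarith)
      (by nlinarith)

/-- In the moderate-deviations construction, if
`0 < ω ≤ min{(1−γ)/(σy), (2−σy)/(σy)}` with `1 < σ y < 2γ` and `γ ∈ (1/2, 1)`, then both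
`P₁ = Exp(σ)` and `P₂` belong to the class `P_{σ,y,γ}`. -/
theorem md_class_inclusion (σ y γ ω x₀ : ℝ) (hσ : 0 < σ) (hx₀ : 0 < x₀)
    (hγ : γ ∈ Set.Ioo (1 / 2 : ℝ) 1) (hσy1 : 1 < σ * y) (hσy2 : σ * y < 2 * γ)
    (hω0 : 0 < ω) (hω : ω ≤ min ((1 - γ) / (σ * y)) ((2 - σ * y) / (σ * y))) :
    expMeasure σ ∈ Pclass σ y γ ∧ mdP2 σ ω x₀ ∈ Pclass σ y γ :=
  md_class_inclusion_general σ y γ ω x₀ hσ hx₀ hγ hσy1 hω0 hω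

end Stab
end
end

section
/- In the moderate-deviations construction, the Kullback-Leibler divergence satisfies D_KL(P₁ ‖ P₂) = (ω − log(1+ω)) (1 − e^{−σ x₀}), and consequently D_KL(P₁ ‖ P₂) ≤ (1/2) ω² (1 − e^{−σ x₀}). -/
/-!
`P₁` has density `exp φ` with respect to `P₂`, where `φ x = σ ω x - log (1 + ω)` on
`[0, x₀]` and `φ x = σ ω x₀` beyond, so `D_KL(P₁‖P₂) = E_{P₁}[φ]`, an elementary
exponential integral. The bound then follows from
`log (1 + ω) ≥ 2 ω / (ω + 2) ≥ ω - ω² / 2`.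
-/

open MeasureTheory ProbabilityTheory Real Set
open scoped ENNReal NNReal

noncomputable section

namespace Stab

lemma klDiv_withDensity_exp {P : Measure ℝ} [SigmaFinite P] {φ : ℝ → ℝ}
    (hφ : Measurable φ)
    (hint : Integrable φ (P.withDensity fun x => ENNReal.ofReal (exp (φ x)))) :
    klDiv (P.withDensity fun x => ENNReal.ofReal (exp (φ x))) P =
      ((∫ x, φ x ∂P.withDensity fun x => ENNReal.ofReal (exp (φ x)) : ℝ) : EReal) := by
  set Q := P.withDensity fun x => ENNReal.ofReal (exp (φ x))
  have hQP : Q ≪ P := withDensity_absolutelyContinuous _ _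
  have hlog : (fun x => log ((Q.rnDeriv P x).toReal)) =ᵐ[Q] φ := by
    filter_upwards [hQP.ae_le (Measure.rnDeriv_withDensity P hφ.exp.ennreal_ofReal)] with x hx
    rw [hx, ENNReal.toReal_ofReal (exp_pos _).le, log_exp]
  rw [klDiv, if_pos ⟨hQP, hint.congr hlog.symm⟩, integral_congr_ae hlog]

lemma measurable_exponentialPDF (σ : ℝ) : Measurable (exponentialPDF σ) :=
  (measurable_exponentialPDFReal σ).ennreal_ofReal

lemma integral_expMeasure {σ : ℝ} (hσ : 0 < σ) (f : ℝ → ℝ) :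
    ∫ x, f x ∂expMeasure σ = ∫ x in Ioi 0, σ * exp (-σ * x) * f x := by
  have hpdf : ∀ x, (exponentialPDF σ x).toReal = if 0 ≤ x then σ * exp (-σ * x) else 0 := by
    intro x
    rw [exponentialPDF_eq]
    split_ifs <;> simp [ENNReal.toReal_ofReal, hσ.le, (exp_pos _).le]
  rw [show expMeasure σ = volume.withDensity (exponentialPDF σ) from rfl,
    integral_withDensity_eq_integral_toReal_smul (measurable_exponentialPDF σ)
      (ae_of_all _ fun _ => by simp [exponentialPDF_eq]),
    ← integral_Ici_eq_integral_Ioi, ← setIntegral_eq_integral_of_forall_compl_eq_zero]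
  · refine setIntegral_congr_fun measurableSet_Ici fun x hx => ?_
    simp [hpdf, show (0:ℝ) ≤ x from hx]
  · intro x hx
    simp [hpdf, show ¬ (0:ℝ) ≤ x from hx]

lemma ae_nonneg_expMeasure (σ : ℝ) : ∀ᵐ x ∂expMeasure σ, 0 ≤ x := by
  change ∀ᵐ x ∂volume.withDensity (exponentialPDF σ), 0 ≤ x
  rw [ae_withDensity_iff (measurable_exponentialPDF σ)]
  exact ae_of_all _ fun x hx => not_lt.1 fun hx0 => hx (exponentialPDF_of_neg hx0)

lemma sub_log_one_add_le {ω : ℝ} (hω : 0 ≤ ω) : ω - log (1 + ω) ≤ ω ^ 2 / 2 := by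
  have h := le_log_one_add_of_nonneg hω
  rw [div_le_iff₀ (by linarith)] at h
  nlinarith

/-- `log (dP₁/dP₂)`; its values on the `P₂`-null set `(-∞, 0)` are irrelevant. -/
def mdLogRatio (σ ω x₀ x : ℝ) : ℝ :=
  if x ≤ x₀ then σ * ω * x - log (1 + ω) else σ * ω * x₀

lemma measurable_mdLogRatio (σ ω x₀ : ℝ) : Measurable (mdLogRatio σ ω x₀) :=
  Measurable.ite measurableSet_Iic (by fun_prop) measurable_const

instance sigmaFinite_mdP2 (σ ω x₀ : ℝ) : SigmaFinite (mdP2 σ ω x₀) :=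
  SigmaFinite.withDensity_of_ne_top' fun x => by split_ifs <;> simp

lemma expMeasure_eq_withDensity_mdP2 (σ : ℝ) {ω : ℝ} (hω : 0 < 1 + ω) (x₀ : ℝ) :
    expMeasure σ =
      (mdP2 σ ω x₀).withDensity fun x => ENNReal.ofReal (exp (mdLogRatio σ ω x₀ x)) := by
  change volume.withDensity (exponentialPDF σ) = _
  rw [mdP2, ← withDensity_mul _ ?_ (measurable_mdLogRatio σ ω x₀).exp.ennreal_ofReal]
  swap
  · exact Measurable.ite measurableSet_Iio measurable_const
      (Measurable.ite measurableSet_Iic (by fun_prop) (by fun_prop))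
  refine congrArg volume.withDensity (funext fun x => ?_)
  rcases lt_or_ge x 0 with hx0 | hx0
  · simp [exponentialPDF_of_neg hx0, hx0]
  rw [exponentialPDF_of_nonneg hx0, Pi.mul_apply, if_neg hx0.not_gt, mdLogRatio]
  split_ifs
  · rw [← ENNReal.ofReal_mul' (exp_pos _).le, exp_sub, exp_log hω]
    congr 1
    field_simp
    rw [mul_assoc, ← exp_add]
    ring_nf
  · rw [← ENNReal.ofReal_mul' (exp_pos _).le, mul_right_comm, mul_assoc σ, ← exp_add,
      neg_add_cancel, exp_zero, mul_one, neg_mul]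

lemma integrable_mdLogRatio_expMeasure {σ : ℝ} (hσ : 0 < σ) (ω x₀ : ℝ) :
    Integrable (mdLogRatio σ ω x₀) (expMeasure σ) := by
  have := isProbabilityMeasure_expMeasure hσ
  refine .of_bound (measurable_mdLogRatio σ ω x₀).aestronglyMeasurable
    (|σ * ω * x₀| + |log (1 + ω)|) ?_
  filter_upwards [ae_nonneg_expMeasure σ] with x hx
  rw [Real.norm_eq_abs, mdLogRatio]
  split_ifs with hxx₀
  · calc |σ * ω * x - log (1 + ω)| ≤ |σ * ω * x| + |log (1 + ω)| := abs_sub _ _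
      _ ≤ |σ * ω * x₀| + |log (1 + ω)| := by
        rw [abs_mul, abs_mul _ x₀, abs_of_nonneg hx, abs_of_nonneg (hx.trans hxx₀)]
        gcongr
  · exact le_add_of_nonneg_right (abs_nonneg _)

lemma integral_mdLogRatio_expMeasure {σ : ℝ} (hσ : 0 < σ) (ω : ℝ) {x₀ : ℝ}
    (hx₀ : 0 ≤ x₀) :
    ∫ x, mdLogRatio σ ω x₀ x ∂expMeasure σ =
      (ω - log (1 + ω)) * (1 - exp (-σ * x₀)) := by
  set c := log (1 + ω)
  have hleft : EqOn (fun x => σ * exp (-σ * x) * mdLogRatio σ ω x₀ x)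
      (fun x => σ * exp (-σ * x) * (σ * ω * x - c)) (Iic x₀) := fun x hx => by
    simp only [mdLogRatio, if_pos (show x ≤ x₀ from hx), c]
  have hright : EqOn (fun x => σ * exp (-σ * x) * mdLogRatio σ ω x₀ x)
      (fun x => σ * ω * x₀ * σ * exp (-σ * x)) (Ioi x₀) := fun x hx => by
    simp only [mdLogRatio, if_neg (not_le.2 (show x₀ < x from hx))]
    ring
  have hderiv : ∀ x, HasDerivAt (fun y => exp (-σ * y) * (c - ω - σ * ω * y))
      (σ * exp (-σ * x) * (σ * ω * x - c)) x := fun x => by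
    refine ((((hasDerivAt_id x).const_mul (-σ)).exp).fun_mul
      (((hasDerivAt_id x).const_mul (σ * ω)).const_sub (c - ω))).congr_deriv ?_
    simp only [id]
    ring
  have hcont : Continuous fun x => σ * exp (-σ * x) * (σ * ω * x - c) := by fun_prop
  have hint_left :
      IntervalIntegrable (fun x => σ * exp (-σ * x) * mdLogRatio σ ω x₀ x) volume 0 x₀ :=
    (intervalIntegrable_congr (hleft.mono (uIoc_of_le hx₀ ▸ Ioc_subset_Iic_self))).2
      (hcont.intervalIntegrable 0 x₀)
  have hint_right :
      IntegrableOn (fun x => σ * exp (-σ * x) * mdLogRatio σ ω x₀ x) (Ioi x₀) :=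
    IntegrableOn.congr_fun ((exp_neg_integrableOn_Ioi x₀ hσ).const_mul (σ * ω * x₀ * σ))
      (fun x hx => (hright hx).symm) measurableSet_Ioi
  have h_left : ∫ x in 0..x₀, σ * exp (-σ * x) * mdLogRatio σ ω x₀ x =
      exp (-σ * x₀) * (c - ω - σ * ω * x₀) - (c - ω) := by
    rw [intervalIntegral.integral_congr (hleft.mono (uIcc_of_le hx₀ ▸ Icc_subset_Iic_self)),
      intervalIntegral.integral_eq_sub_of_hasDerivAt (fun x _ => hderiv x)
        (hcont.intervalIntegrable 0 x₀)]
    simp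
  have h_right : ∫ x in Ioi x₀, σ * exp (-σ * x) * mdLogRatio σ ω x₀ x =
      σ * ω * x₀ * exp (-σ * x₀) := by
    rw [setIntegral_congr_fun measurableSet_Ioi hright, integral_const_mul,
      integral_exp_mul_Ioi (neg_lt_zero.2 hσ)]
    field_simp
  rw [integral_expMeasure hσ, ← intervalIntegral.integral_interval_add_Ioi' hint_left hint_right,
    h_left, h_right]
  ring

/-- In the moderate-deviations construction,
`D_KL(P₁‖P₂) = (ω − log(1+ω))(1 − e^{−σ x₀})`, and consequently
`D_KL(P₁‖P₂) ≤ (1/2) ω² (1 − e^{−σ x₀})`. -/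
theorem md_kl_bound (σ ω x₀ : ℝ) (hσ : 0 < σ) (hω : 0 < ω) (hx₀ : 0 < x₀) :
    klDiv (expMeasure σ) (mdP2 σ ω x₀) =
      (((ω - Real.log (1 + ω)) * (1 - Real.exp (-σ * x₀)) : ℝ) : EReal) ∧
    klDiv (expMeasure σ) (mdP2 σ ω x₀) ≤
      ((1 / 2 * ω ^ 2 * (1 - Real.exp (-σ * x₀)) : ℝ) : EReal) := by
  have hkl : klDiv (expMeasure σ) (mdP2 σ ω x₀) =
      (((ω - log (1 + ω)) * (1 - exp (-σ * x₀)) : ℝ) : EReal) := by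
    have hint := integrable_mdLogRatio_expMeasure hσ ω x₀
    rw [← integral_mdLogRatio_expMeasure hσ ω hx₀.le]
    rw [expMeasure_eq_withDensity_mdP2 σ (by linarith : 0 < 1 + ω) x₀] at hint ⊢
    exact klDiv_withDensity_exp (measurable_mdLogRatio σ ω x₀) hint
  refine ⟨hkl, hkl.trans_le (EReal.coe_le_coe_iff.2 ?_)⟩
  have htail : 0 ≤ 1 - exp (-σ * x₀) := sub_nonneg.2 (exp_le_one_iff.2 (by nlinarith))
  exact mul_le_mul_of_nonneg_right ((sub_log_one_add_le hω.le).trans_eq (by ring)) htail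

end Stab
end
end

section
/- In the moderate-deviations construction, for every 0 ≤ λ < σ, the moment generating function of P₂ satisfies E_{P₂}[e^{λ R}] = (σ/(σ − λ)) ( 1 − (ω λ / (σ(1+ω) − λ)) (1 − e^{−(σ(1+ω) − λ) x₀}) ) ≤ σ/(σ − λ), and moreover E_{P₂}[R] = (1/(σ(1+ω))) (1 + ω e^{−σ(1+ω) x₀}) ≤ 1/σ. -/
/-! Integrals against `P₂` split into a piece over `[0, x₀]` and one over `(x₀, ∞)`. Against
`e^{λx}` or `x` each piece is an elementary integral of `e^{-kx}` or `x e^{-kx}`, evaluated by the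
fundamental theorem of calculus, and the two bounds follow from `e^{-(σ(1+ω)-λ)x₀} ≤ 1`. -/

open MeasureTheory ProbabilityTheory Real Set
open scoped ENNReal NNReal

noncomputable section

namespace Stab

open Filter Topology

section ExpIntegrals

variable {k : ℝ}

theorem hasDerivAt_neg_exp_neg_mul_div (hk : k ≠ 0) (x : ℝ) :
    HasDerivAt (fun x => -exp (-k * x) / k) (exp (-k * x)) x := by
  refine (((hasDerivAt_id' x).const_mul (-k)).exp.neg.div_const k).congr_deriv ?_
  field_simp

theorem hasDerivAt_neg_mul_add_one_mul_exp_neg_mul_div_sq (hk : k ≠ 0) (x : ℝ) :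
    HasDerivAt (fun x => -((k * x + 1) * exp (-k * x)) / k ^ 2) (x * exp (-k * x)) x := by
  refine (((((hasDerivAt_id' x).const_mul k).add_const 1).mul
    ((hasDerivAt_id' x).const_mul (-k)).exp).neg.div_const (k ^ 2)).congr_deriv ?_
  field_simp
  ring

theorem tendsto_neg_mul_add_one_mul_exp_neg_mul_div_sq (hk : 0 < k) :
    Tendsto (fun x => -((k * x + 1) * exp (-k * x)) / k ^ 2) atTop (𝓝 0) := by
  have hy : Tendsto (fun y => (y + 1) * exp (-y)) atTop (𝓝 0) := by
    simpa [add_mul] using (tendsto_pow_mul_exp_neg_atTop_nhds_zero 1).add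
      (tendsto_pow_mul_exp_neg_atTop_nhds_zero 0)
  simpa [neg_mul] using
    ((hy.comp (tendsto_id.const_mul_atTop hk)).neg.div_const (k ^ 2))

theorem integral_exp_neg_mul_interval (hk : k ≠ 0) (a b : ℝ) :
    ∫ x in a..b, exp (-k * x) = (exp (-k * a) - exp (-k * b)) / k := by
  rw [intervalIntegral.integral_eq_sub_of_hasDerivAt
    (fun x _ => hasDerivAt_neg_exp_neg_mul_div hk x)
    ((by fun_prop : Continuous _).intervalIntegrable _ _)]
  ring

theorem integral_exp_neg_mul_Ioi (hk : 0 < k) (a : ℝ) :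
    ∫ x in Ioi a, exp (-k * x) = exp (-k * a) / k := by
  rw [integral_exp_mul_Ioi (by linarith), neg_div_neg_eq]

theorem integral_mul_exp_neg_mul_interval (hk : k ≠ 0) (a b : ℝ) :
    ∫ x in a..b, x * exp (-k * x) =
      ((k * a + 1) * exp (-k * a) - (k * b + 1) * exp (-k * b)) / k ^ 2 := by
  rw [intervalIntegral.integral_eq_sub_of_hasDerivAt
    (fun x _ => hasDerivAt_neg_mul_add_one_mul_exp_neg_mul_div_sq hk x)
    ((by fun_prop : Continuous _).intervalIntegrable _ _)]
  ring

theorem integrableOn_mul_exp_neg_mul_Ioi (hk : 0 < k) {a : ℝ} (ha : 0 ≤ a) :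
    IntegrableOn (fun x => x * exp (-k * x)) (Ioi a) :=
  integrableOn_Ioi_deriv_of_nonneg'
    (fun x _ => hasDerivAt_neg_mul_add_one_mul_exp_neg_mul_div_sq hk.ne' x)
    (fun _ hx => mul_nonneg (ha.trans hx.out.le) (exp_pos _).le)
    (tendsto_neg_mul_add_one_mul_exp_neg_mul_div_sq hk)

theorem integral_mul_exp_neg_mul_Ioi (hk : 0 < k) {a : ℝ} (ha : 0 ≤ a) :
    ∫ x in Ioi a, x * exp (-k * x) = (k * a + 1) * exp (-k * a) / k ^ 2 := by
  rw [integral_Ioi_of_hasDerivAt_of_nonneg'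
    (fun x _ => hasDerivAt_neg_mul_add_one_mul_exp_neg_mul_div_sq hk.ne' x)
    (fun _ hx => mul_nonneg (ha.trans hx.out.le) (exp_pos _).le)
    (tendsto_neg_mul_add_one_mul_exp_neg_mul_div_sq hk)]
  ring

end ExpIntegrals

theorem lintegral_ofReal_mdP2 {σ ω x₀ : ℝ} (hσ : 0 ≤ σ) (hω : 0 ≤ ω) (hx₀ : 0 ≤ x₀)
    {g : ℝ → ℝ} (hg : Continuous g) (hg0 : ∀ x, 0 ≤ x → 0 ≤ g x)
    (hint : IntegrableOn (fun x => g x * exp (-σ * x)) (Ioi x₀)) :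
    ∫⁻ x, ENNReal.ofReal (g x) ∂mdP2 σ ω x₀ =
      ENNReal.ofReal (σ * (1 + ω) * (∫ x in 0..x₀, g x * exp (-(σ * (1 + ω)) * x)) +
        σ * exp (-(σ * ω * x₀)) * ∫ x in Ioi x₀, g x * exp (-σ * x)) := by
  rw [mdP2, lintegral_withDensity_eq_lintegral_mul _
    (Measurable.ite measurableSet_Iio measurable_const
      (Measurable.ite measurableSet_Iic (by fun_prop) (by fun_prop))) hg.measurable.ennreal_ofReal]
  set c := σ * (1 + ω)
  set d := σ * exp (-(σ * ω * x₀))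
  have hc : 0 ≤ c := by positivity
  have hd : 0 ≤ d := by positivity
  have hhead : ∀ x ∈ Icc 0 x₀, 0 ≤ c * (g x * exp (-c * x)) :=
    fun x hx => mul_nonneg hc (mul_nonneg (hg0 x hx.1) (exp_pos _).le)
  have htail : ∀ x ∈ Ioi x₀, 0 ≤ d * (g x * exp (-σ * x)) :=
    fun x hx => mul_nonneg hd (mul_nonneg (hg0 x (hx₀.trans hx.out.le)) (exp_pos _).le)
  have hsplit : ∀ x, (if x < 0 then 0
      else if x ≤ x₀ then ENNReal.ofReal (c * exp (-c * x))
      else ENNReal.ofReal (d * exp (-σ * x))) * ENNReal.ofReal (g x) =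
      (Icc 0 x₀).indicator (fun x => ENNReal.ofReal (c * (g x * exp (-c * x)))) x +
      (Ioi x₀).indicator (fun x => ENNReal.ofReal (d * (g x * exp (-σ * x)))) x := by
    intro x
    rcases lt_or_ge x 0 with hx | hx
    · simp [hx, hx.not_ge, (hx.trans_le hx₀).not_gt]
    rcases le_or_gt x x₀ with hx' | hx'
    · rw [if_neg hx.not_gt, if_pos hx', indicator_of_mem (show x ∈ Icc 0 x₀ from ⟨hx, hx'⟩),
        indicator_of_notMem (show x ∉ Ioi x₀ from hx'.not_gt), add_zero,
        ← ENNReal.ofReal_mul (by positivity)]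
      ring_nf
    · rw [if_neg hx.not_gt, if_neg hx'.not_ge,
        indicator_of_notMem (show x ∉ Icc 0 x₀ from fun h => hx'.not_ge h.2),
        indicator_of_mem (show x ∈ Ioi x₀ from hx'), zero_add,
        ← ENNReal.ofReal_mul (by positivity)]
      ring_nf
  simp only [Pi.mul_apply, hsplit]
  rw [lintegral_add_left ((Measurable.ennreal_ofReal (by fun_prop)).indicator measurableSet_Icc),
    lintegral_indicator measurableSet_Icc, lintegral_indicator measurableSet_Ioi,
    ← ofReal_integral_eq_lintegral_ofReal (Continuous.integrableOn_Icc
      (by fun_prop : Continuous fun x => c * (g x * exp (-c * x))))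
      ((ae_restrict_iff' measurableSet_Icc).2 (ae_of_all _ hhead)),
    ← ofReal_integral_eq_lintegral_ofReal (hint.const_mul d)
      ((ae_restrict_iff' measurableSet_Ioi).2 (ae_of_all _ htail)),
    ← ENNReal.ofReal_add (setIntegral_nonneg measurableSet_Icc hhead)
      (setIntegral_nonneg measurableSet_Ioi htail),
    integral_const_mul, integral_const_mul, integral_Icc_eq_integral_Ioc,
    ← intervalIntegral.integral_of_le hx₀]

theorem expMoment_mdP2 {σ ω x₀ l : ℝ} (hσ : 0 ≤ σ) (hω : 0 ≤ ω) (hx₀ : 0 ≤ x₀) (hl : l < σ) :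
    expMoment (mdP2 σ ω x₀) l =
      ENNReal.ofReal (σ / (σ - l) *
        (1 - ω * l / (σ * (1 + ω) - l) * (1 - exp (-(σ * (1 + ω) - l) * x₀)))) := by
  have hσl : 0 < σ - l := sub_pos.2 hl
  have hcl : 0 < σ * (1 + ω) - l := by nlinarith
  have hmerge : ∀ k x, exp (l * x) * exp (-k * x) = exp (-(k - l) * x) := fun k x => by
    rw [← exp_add]; ring_nf
  rw [expMoment, lintegral_ofReal_mdP2 hσ hω hx₀ (by fun_prop) (fun _ _ => (exp_pos _).le)
    (by simpa only [hmerge] using integrableOn_exp_mul_Ioi (neg_neg_of_pos hσl) x₀)]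
  simp only [hmerge]
  rw [integral_exp_neg_mul_interval hcl.ne', integral_exp_neg_mul_Ioi hσl]
  have hE : exp (-(σ * ω * x₀)) * exp (-(σ - l) * x₀) = exp (-(σ * (1 + ω) - l) * x₀) := by
    rw [← exp_add]; ring_nf
  congr 1
  rw [mul_zero, exp_zero, ← hE]
  field_simp
  ring

theorem lintegral_ofReal_id_mdP2 {σ ω x₀ : ℝ} (hσ : 0 < σ) (hω : 0 ≤ ω) (hx₀ : 0 ≤ x₀) :
    ∫⁻ x, ENNReal.ofReal x ∂mdP2 σ ω x₀ =
      ENNReal.ofReal (1 / (σ * (1 + ω)) * (1 + ω * exp (-(σ * (1 + ω)) * x₀))) := by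
  have hc : 0 < σ * (1 + ω) := by positivity
  rw [lintegral_ofReal_mdP2 hσ.le hω hx₀ continuous_id' (fun _ hx => hx)
    (integrableOn_mul_exp_neg_mul_Ioi hσ hx₀), integral_mul_exp_neg_mul_interval hc.ne',
    integral_mul_exp_neg_mul_Ioi hσ hx₀]
  have hE : exp (-(σ * ω * x₀)) * exp (-σ * x₀) = exp (-(σ * (1 + ω)) * x₀) := by
    rw [← exp_add]; ring_nf
  congr 1
  simp only [mul_zero, exp_zero]
  rw [← hE]
  field_simp
  ring

theorem expMoment_mdP2_le {σ ω x₀ l : ℝ} (hσ : 0 ≤ σ) (hω : 0 ≤ ω) (hx₀ : 0 ≤ x₀) (hl0 : 0 ≤ l)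
    (hl : l < σ) : expMoment (mdP2 σ ω x₀) l ≤ ENNReal.ofReal (σ / (σ - l)) := by
  have hσl : 0 < σ - l := sub_pos.2 hl
  have hcl : 0 < σ * (1 + ω) - l := by nlinarith
  have hE : exp (-(σ * (1 + ω) - l) * x₀) ≤ 1 :=
    exp_le_one_iff.2 (mul_nonpos_of_nonpos_of_nonneg (neg_nonpos.2 hcl.le) hx₀)
  rw [expMoment_mdP2 hσ hω hx₀ hl]
  refine ENNReal.ofReal_le_ofReal (mul_le_of_le_one_right (div_nonneg hσ hσl.le) ?_)
  exact sub_le_self _ (mul_nonneg (div_nonneg (mul_nonneg hω hl0) hcl.le) (sub_nonneg.2 hE))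

theorem lintegral_ofReal_id_mdP2_le {σ ω x₀ : ℝ} (hσ : 0 < σ) (hω : 0 ≤ ω) (hx₀ : 0 ≤ x₀) :
    ∫⁻ x, ENNReal.ofReal x ∂mdP2 σ ω x₀ ≤ ENNReal.ofReal (1 / σ) := by
  have hE : exp (-(σ * (1 + ω)) * x₀) ≤ 1 :=
    exp_le_one_iff.2 (mul_nonpos_of_nonpos_of_nonneg (neg_nonpos.2 (by positivity)) hx₀)
  rw [lintegral_ofReal_id_mdP2 hσ hω hx₀]
  refine ENNReal.ofReal_le_ofReal ?_
  calc 1 / (σ * (1 + ω)) * (1 + ω * exp (-(σ * (1 + ω)) * x₀))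
      ≤ 1 / (σ * (1 + ω)) * (1 + ω) := by gcongr; exact mul_le_of_le_one_right hω hE
    _ = 1 / σ := by field_simp

/-- In the moderate-deviations construction, for every `0 ≤ λ < σ`,
`E_{P₂}[e^{λ R}] = (σ/(σ−λ))(1 − (ωλ/(σ(1+ω)−λ))(1 − e^{−(σ(1+ω)−λ)x₀})) ≤ σ/(σ−λ)`, and
`E_{P₂}[R] = (1/(σ(1+ω)))(1 + ω e^{−σ(1+ω)x₀}) ≤ 1/σ`. -/
theorem md_mgf_and_mean (σ ω x₀ : ℝ) (hσ : 0 < σ) (hω : 0 < ω) (hx₀ : 0 < x₀) :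
    (∀ l : ℝ, 0 ≤ l → l < σ →
      expMoment (mdP2 σ ω x₀) l =
        ENNReal.ofReal (σ / (σ - l) *
          (1 - ω * l / (σ * (1 + ω) - l) * (1 - Real.exp (-(σ * (1 + ω) - l) * x₀)))) ∧
      expMoment (mdP2 σ ω x₀) l ≤ ENNReal.ofReal (σ / (σ - l))) ∧
    (∫⁻ x, ENNReal.ofReal x ∂(mdP2 σ ω x₀)) =
      ENNReal.ofReal (1 / (σ * (1 + ω)) * (1 + ω * Real.exp (-(σ * (1 + ω)) * x₀))) ∧
    (∫⁻ x, ENNReal.ofReal x ∂(mdP2 σ ω x₀)) ≤ ENNReal.ofReal (1 / σ) :=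
  ⟨fun _ hl0 hl => ⟨expMoment_mdP2 hσ.le hω.le hx₀.le hl,
      expMoment_mdP2_le hσ.le hω.le hx₀.le hl0 hl⟩,
    lintegral_ofReal_id_mdP2 hσ hω.le hx₀.le, lintegral_ofReal_id_mdP2_le hσ hω.le hx₀.le⟩

end Stab
end
end
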